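/- Let M(z) = P(Z ≥ z)/φ(z) be Mills' ratio for a standard Gaussian Z with density φ. Then for all x ≥ 0, x·M(x) ≤ (x² + 2)/(x² + 3) ≤ 1, and for all x ≥ 1, x·M(x) ≥ (x² + 1/(5x²))/(1 + x²) ≥ x²/(1 + x²). -/

import Mathlib

/-! For a weight `r`, the function `-φ r` has derivative `φ (t r - r')` because `φ' = -t φ`.
Integrating from `x` to `∞` therefore gives `Ψ(x) ≤ φ(x) r(x)` as soon as `t r - r' ≥ 1`,
and `φ(x) r(x) ≤ Ψ(x)` as soon as `0 ≤ t r - r' ≤ 1`. The weight `(t² + 2)/(t³ + 3t)`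
satisfies `t r - r' = 1 + 6/(t³ + 3t)²`, and the weight `(t⁴ + 1/5)/(t³ + t⁵)` satisfies
`t r - r' = 1 - (3/5) t² (3t² + 1)(t² - 1)/(t³ + t⁵)²`, which lies in `[0, 1]` for `t ≥ 1`. -/

open MeasureTheory ProbabilityTheory Set Filter
open scoped Topology ENNReal NNReal Real

noncomputable section

/-- The standard Gaussian upper tail `Ψ(x) = P(Z ≥ x)` for `Z ∼ N(0,1)`. -/
def gaussTail (x : ℝ) : ℝ := ((gaussianReal 0 1) (Set.Ici x)).toReal

/-- The standard Gaussian density `φ(x) = (2π)^{-1/2} e^{-x²/2}`. -/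
def gaussPhi (x : ℝ) : ℝ := (Real.sqrt (2 * Real.pi))⁻¹ * Real.exp (-x ^ 2 / 2)

/-- Mills' ratio `M(x) = Ψ(x)/φ(x)`. -/
def mills (x : ℝ) : ℝ := gaussTail x / gaussPhi x

section ImproperIntegral

variable {f F f' : ℝ → ℝ} {x : ℝ}

lemma integral_Ioi_le_of_hasDerivAt (hF : ∀ t ∈ Ici x, HasDerivAt F (f' t) t)
    (hF_lim : Tendsto F atTop (𝓝 0)) (hf : IntegrableOn f (Ioi x))
    (hf'_nonneg : ∀ t ∈ Ioi x, 0 ≤ f' t) (hff' : ∀ t ∈ Ioi x, f t ≤ f' t) :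
    ∫ t in Ioi x, f t ≤ -F x := by
  calc ∫ t in Ioi x, f t
      ≤ ∫ t in Ioi x, f' t :=
        setIntegral_mono_on hf (integrableOn_Ioi_deriv_of_nonneg' hF hf'_nonneg hF_lim)
          measurableSet_Ioi hff'
    _ = -F x := by rw [integral_Ioi_of_hasDerivAt_of_nonneg' hF hf'_nonneg hF_lim, zero_sub]

lemma le_integral_Ioi_of_hasDerivAt (hF : ∀ t ∈ Ici x, HasDerivAt F (f' t) t)
    (hF_lim : Tendsto F atTop (𝓝 0)) (hf : IntegrableOn f (Ioi x))
    (hf'_nonneg : ∀ t ∈ Ioi x, 0 ≤ f' t) (hf'f : ∀ t ∈ Ioi x, f' t ≤ f t) :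
    -F x ≤ ∫ t in Ioi x, f t := by
  calc -F x
      = ∫ t in Ioi x, f' t := by
        rw [integral_Ioi_of_hasDerivAt_of_nonneg' hF hf'_nonneg hF_lim, zero_sub]
    _ ≤ ∫ t in Ioi x, f t :=
        setIntegral_mono_on (integrableOn_Ioi_deriv_of_nonneg' hF hf'_nonneg hF_lim) hf
          measurableSet_Ioi hf'f

end ImproperIntegral

lemma gaussPhi_pos (x : ℝ) : 0 < gaussPhi x := by
  unfold gaussPhi
  positivity

lemma gaussPhi_eq_gaussianPDFReal : gaussPhi = gaussianPDFReal 0 1 := by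
  funext x
  simp [gaussPhi, gaussianPDFReal]

lemma gaussTail_eq_integral (x : ℝ) : gaussTail x = ∫ t in Ioi x, gaussPhi t := by
  rw [gaussTail, gaussianReal_apply_eq_integral 0 one_ne_zero,
    ENNReal.toReal_ofReal (integral_nonneg fun t => gaussianPDFReal_nonneg 0 1 t),
    ← gaussPhi_eq_gaussianPDFReal, integral_Ici_eq_integral_Ioi]

lemma integrableOn_gaussPhi (s : Set ℝ) : IntegrableOn gaussPhi s := by
  rw [gaussPhi_eq_gaussianPDFReal]
  exact (integrable_gaussianPDFReal 0 1).integrableOn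

lemma hasDerivAt_gaussPhi (x : ℝ) : HasDerivAt gaussPhi (-x * gaussPhi x) x := by
  have h_exponent : HasDerivAt (fun t : ℝ => -t ^ 2 / 2) (-x) x :=
    ((hasDerivAt_pow 2 x).neg.div_const 2).congr_deriv (by ring)
  exact (h_exponent.exp.const_mul (√(2 * π))⁻¹).congr_deriv (by simp only [gaussPhi]; ring)

lemma tendsto_gaussPhi_atTop : Tendsto gaussPhi atTop (𝓝 0) := by
  have h_exponent : Tendsto (fun x : ℝ => -x ^ 2 / 2) atTop atBot :=
    (tendsto_neg_atBot_iff.mpr (tendsto_pow_atTop two_ne_zero)).atBot_div_const two_pos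
  have h := (Real.tendsto_exp_atBot.comp h_exponent).const_mul (√(2 * π))⁻¹
  rwa [mul_zero] at h

section MillsComparison

variable {r r' : ℝ → ℝ} {x : ℝ}

lemma hasDerivAt_neg_gaussPhi_mul {t : ℝ} (hr : HasDerivAt r (r' t) t) :
    HasDerivAt (fun u => -(gaussPhi u * r u)) (gaussPhi t * (t * r t - r' t)) t :=
  ((hasDerivAt_gaussPhi t).mul hr).neg.congr_deriv (by ring)

lemma tendsto_neg_gaussPhi_mul (hr : IsBoundedUnder (· ≤ ·) atTop ((‖·‖) ∘ r)) :
    Tendsto (fun u => -(gaussPhi u * r u)) atTop (𝓝 0) := by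
  simpa using (tendsto_gaussPhi_atTop.zero_mul_isBoundedUnder_le hr).neg

lemma mills_le_of_one_le_sub_deriv (hr : ∀ t ∈ Ici x, HasDerivAt r (r' t) t)
    (hr_bdd : IsBoundedUnder (· ≤ ·) atTop ((‖·‖) ∘ r))
    (h_one_le : ∀ t ∈ Ioi x, 1 ≤ t * r t - r' t) :
    mills x ≤ r x := by
  have h_tail : gaussTail x ≤ gaussPhi x * r x := by
    rw [gaussTail_eq_integral, ← neg_neg (gaussPhi x * r x)]
    refine integral_Ioi_le_of_hasDerivAt (fun t ht => hasDerivAt_neg_gaussPhi_mul (hr t ht))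
      (tendsto_neg_gaussPhi_mul hr_bdd) (integrableOn_gaussPhi _) (fun t ht => ?_)
      (fun t ht => ?_)
    · exact mul_nonneg (gaussPhi_pos t).le (zero_le_one.trans (h_one_le t ht))
    · exact le_mul_of_one_le_right (gaussPhi_pos t).le (h_one_le t ht)
  rwa [mills, div_le_iff₀ (gaussPhi_pos x), mul_comm]

lemma le_mills_of_sub_deriv_mem_Icc (hr : ∀ t ∈ Ici x, HasDerivAt r (r' t) t)
    (hr_bdd : IsBoundedUnder (· ≤ ·) atTop ((‖·‖) ∘ r))
    (h_mem : ∀ t ∈ Ioi x, t * r t - r' t ∈ Icc 0 1) :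
    r x ≤ mills x := by
  have h_tail : gaussPhi x * r x ≤ gaussTail x := by
    rw [gaussTail_eq_integral, ← neg_neg (gaussPhi x * r x)]
    refine le_integral_Ioi_of_hasDerivAt (fun t ht => hasDerivAt_neg_gaussPhi_mul (hr t ht))
      (tendsto_neg_gaussPhi_mul hr_bdd) (integrableOn_gaussPhi _) (fun t ht => ?_)
      (fun t ht => ?_)
    · exact mul_nonneg (gaussPhi_pos t).le (h_mem t ht).1
    · exact mul_le_of_le_one_right (gaussPhi_pos t).le (h_mem t ht).2
  rwa [mills, le_div_iff₀ (gaussPhi_pos x), mul_comm]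

end MillsComparison

lemma mills_le_sq_add_two_div {x : ℝ} (hx : 0 < x) :
    mills x ≤ (x ^ 2 + 2) / (x ^ 3 + 3 * x) := by
  refine mills_le_of_one_le_sub_deriv (r := fun t => (t ^ 2 + 2) / (t ^ 3 + 3 * t))
    (r' := fun t => (2 * t * (t ^ 3 + 3 * t) - (t ^ 2 + 2) * (3 * t ^ 2 + 3)) / (t ^ 3 + 3 * t) ^ 2)
    (fun t ht => ?_) (isBoundedUnder_of_eventually_le (a := 3) ?_) (fun t ht => ?_)
  · have hD : t ^ 3 + 3 * t ≠ 0 := by have : 0 < t := hx.trans_le ht; positivity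
    have h_num := (hasDerivAt_pow 2 t).add_const 2
    have h_den := (hasDerivAt_pow 3 t).add ((hasDerivAt_id t).const_mul 3)
    exact (h_num.div h_den hD).congr_deriv (by simp only [Pi.add_apply, id]; ring)
  · filter_upwards [eventually_ge_atTop 1] with t ht
    rw [Function.comp_apply, Real.norm_of_nonneg (by positivity), div_le_iff₀ (by positivity)]
    nlinarith
  · have ht : 0 < t := hx.trans ht
    have h_identity : t * ((t ^ 2 + 2) / (t ^ 3 + 3 * t))
        - (2 * t * (t ^ 3 + 3 * t) - (t ^ 2 + 2) * (3 * t ^ 2 + 3)) / (t ^ 3 + 3 * t) ^ 2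
        = 1 + 6 / (t ^ 3 + 3 * t) ^ 2 := by
      field_simp
      ring
    rw [h_identity]
    exact le_add_of_nonneg_right (by positivity)

lemma pow_four_add_div_le_mills {x : ℝ} (hx : 1 ≤ x) :
    (x ^ 4 + 1 / 5) / (x ^ 3 + x ^ 5) ≤ mills x := by
  refine le_mills_of_sub_deriv_mem_Icc (r := fun t => (t ^ 4 + 1 / 5) / (t ^ 3 + t ^ 5))
    (r' := fun t => (4 * t ^ 3 * (t ^ 3 + t ^ 5) - (t ^ 4 + 1 / 5) * (3 * t ^ 2 + 5 * t ^ 4))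
      / (t ^ 3 + t ^ 5) ^ 2)
    (fun t ht => ?_) (isBoundedUnder_of_eventually_le (a := 2) ?_) (fun t ht => ?_)
  · have hD : t ^ 3 + t ^ 5 ≠ 0 := by have : 0 < t := one_pos.trans_le (hx.trans ht); positivity
    have h_num := (hasDerivAt_pow 4 t).add_const (1 / 5)
    have h_den := (hasDerivAt_pow 3 t).add (hasDerivAt_pow 5 t)
    exact (h_num.div h_den hD).congr_deriv (by simp only [Pi.add_apply]; ring)
  · filter_upwards [eventually_ge_atTop 1] with t ht
    rw [Function.comp_apply, Real.norm_of_nonneg (by positivity), div_le_iff₀ (by positivity)]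
    nlinarith [pow_le_pow_right₀ ht (show 4 ≤ 5 by norm_num), one_le_pow₀ (n := 3) ht]
  · have ht : 1 ≤ t := hx.trans ht.le
    have h_identity : t * ((t ^ 4 + 1 / 5) / (t ^ 3 + t ^ 5))
        - (4 * t ^ 3 * (t ^ 3 + t ^ 5) - (t ^ 4 + 1 / 5) * (3 * t ^ 2 + 5 * t ^ 4))
          / (t ^ 3 + t ^ 5) ^ 2
        = 1 - 3 / 5 * t ^ 2 * (3 * t ^ 2 + 1) * (t ^ 2 - 1) / (t ^ 3 + t ^ 5) ^ 2 := by
      have : 0 < t := one_pos.trans_le ht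
      field_simp
      ring
    rw [h_identity, mem_Icc, sub_nonneg, sub_le_self_iff, div_le_one (by positivity)]
    constructor
    · nlinarith [pow_le_pow_right₀ ht (show 6 ≤ 10 by norm_num),
        pow_pos (one_pos.trans_le ht) 8]
    · have : 0 ≤ t ^ 2 - 1 := by nlinarith
      positivity

/-- Mills' ratio bounds: for all `x ≥ 0`,
`x·M(x) ≤ (x²+2)/(x²+3) ≤ 1`, and for all `x ≥ 1`,
`x²/(1+x²) ≤ (x² + 1/(5x²))/(1+x²) ≤ x·M(x)`. -/
theorem statement14 :
    (∀ x : ℝ, 0 ≤ x →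
      x * mills x ≤ (x ^ 2 + 2) / (x ^ 2 + 3) ∧ (x ^ 2 + 2) / (x ^ 2 + 3) ≤ 1) ∧
    (∀ x : ℝ, 1 ≤ x →
      x ^ 2 / (1 + x ^ 2) ≤ (x ^ 2 + 1 / (5 * x ^ 2)) / (1 + x ^ 2) ∧
      (x ^ 2 + 1 / (5 * x ^ 2)) / (1 + x ^ 2) ≤ x * mills x) := by
  refine ⟨fun x hx => ⟨?_, ?_⟩, fun x hx => ⟨?_, ?_⟩⟩
  · rcases hx.eq_or_lt with rfl | hx
    · norm_num
    calc x * mills x ≤ x * ((x ^ 2 + 2) / (x ^ 3 + 3 * x)) := by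
          gcongr; exact mills_le_sq_add_two_div hx
      _ = (x ^ 2 + 2) / (x ^ 2 + 3) := by field_simp
  · rw [div_le_one (by positivity)]
    linarith
  · gcongr
    exact le_add_of_nonneg_right (by positivity)
  · have hx0 : 0 < x := one_pos.trans_le hx
    calc (x ^ 2 + 1 / (5 * x ^ 2)) / (1 + x ^ 2) = x * ((x ^ 4 + 1 / 5) / (x ^ 3 + x ^ 5)) := by
          field_simp
      _ ≤ x * mills x := by gcongr; exact pow_four_add_div_le_mills hx
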